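/- arXiv:1902.07885 — 2 statements merged into one kernel-verified Lean document; each statement's English description precedes it below -/
import Mathlib

section
/- Let 1 → N → G → H → 1 be an exact sequence of finitely generated groups where H is a finite ℓ-group and the pro-ℓ completion N^ℓ of N has trivial centre. Then the induced sequence of pro-ℓ completions 1 → N^ℓ → G^ℓ → H^ℓ → 1 is exact. -/
/-- The index set for the pro-`ℓ` completion of `G`: normal subgroups `K ⊆ G` such that
`G/K` is a finite `ℓ`-group. -/
def LIndex (G : Type*) [Group G] (ℓ : ℕ) : Type _ :=
  {K : Subgroup G // K.Normal ∧ Finite (G ⧸ K) ∧ ∃ n : ℕ, Nat.card (G ⧸ K) = ℓ ^ n}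

instance LIndex.group {G : Type*} [Group G] {ℓ : ℕ} (K : LIndex G ℓ) : Group (G ⧸ K.1) :=
  haveI := K.2.1
  inferInstance

instance LIndex.finite {G : Type*} [Group G] {ℓ : ℕ} (K : LIndex G ℓ) : Finite (G ⧸ K.1) :=
  K.2.2.1

/-- Each finite quotient carries the discrete topology. -/
instance LIndex.topologicalSpace {G : Type*} [Group G] {ℓ : ℕ} (K : LIndex G ℓ) :
    TopologicalSpace (G ⧸ K.1) := ⊥

/-- The transition maps `G/K₁ → G/K₂` for `K₁ ≤ K₂`. -/
def LIndex.transition {G : Type*} [Group G] {ℓ : ℕ} (K₁ K₂ : LIndex G ℓ) (h : K₁.1 ≤ K₂.1) :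
    (G ⧸ K₁.1) →* (G ⧸ K₂.1) :=
  haveI := K₁.2.1
  haveI := K₂.2.1
  QuotientGroup.map K₁.1 K₂.1 (MonoidHom.id G) fun _ hx => h hx

/-- The pro-`ℓ` completion `G^ℓ` of `G`: the inverse limit of the quotients `G/K` over all
normal subgroups `K` with `G/K` a finite `ℓ`-group, realized as the subgroup of compatible
families in `∏ G/K`. -/
def proLSubgroup (G : Type*) [Group G] (ℓ : ℕ) : Subgroup (∀ K : LIndex G ℓ, G ⧸ K.1) where
  carrier := {f | ∀ (K₁ K₂ : LIndex G ℓ) (h : K₁.1 ≤ K₂.1),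
    LIndex.transition K₁ K₂ h (f K₁) = f K₂}
  one_mem' := by intro K₁ K₂ h; exact map_one _
  mul_mem' := by
    intro a b ha hb K₁ K₂ h
    simp only [Pi.mul_apply, map_mul, ha K₁ K₂ h, hb K₁ K₂ h]
  inv_mem' := by
    intro a ha K₁ K₂ h
    simp only [Pi.inv_apply, map_inv, ha K₁ K₂ h]

/-- The pro-`ℓ` completion of `G`, as a (topological) group. -/
abbrev ProL (G : Type*) [Group G] (ℓ : ℕ) : Type _ := ↥(proLSubgroup G ℓ)

/-- Functoriality of the pro-`ℓ` completion: indices pull back. -/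
def LIndex.comap {A B : Type*} [Group A] [Group B] {ℓ : ℕ} (hℓ : ℓ.Prime)
    (φ : A →* B) (K : LIndex B ℓ) : LIndex A ℓ :=
  ⟨K.1.comap φ, by
    haveI := K.2.1
    haveI : Finite (B ⧸ K.1) := K.2.2.1
    have hker : K.1.comap φ = ((QuotientGroup.mk' K.1).comp φ).ker := by
      rw [← MonoidHom.comap_ker, QuotientGroup.ker_mk']
    refine ⟨inferInstance, ?_, ?_⟩
    · rw [hker]
      exact Finite.of_equiv _ (QuotientGroup.quotientKerEquivRange _).symm.toEquiv
    · obtain ⟨n, hn⟩ := K.2.2.2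
      have hdvd : Nat.card (A ⧸ K.1.comap φ) ∣ ℓ ^ n := by
        rw [hker, ← hn,
          Nat.card_congr (QuotientGroup.quotientKerEquivRange _).toEquiv]
        exact Subgroup.card_subgroup_dvd_card _
      obtain ⟨m, -, hm⟩ := (Nat.dvd_prime_pow hℓ).mp hdvd
      exact ⟨m, hm⟩⟩

/-- Functoriality of the pro-`ℓ` completion: a homomorphism `φ : A → B` induces a
(continuous) homomorphism `A^ℓ → B^ℓ`. -/
def proLMap {A B : Type*} [Group A] [Group B] {ℓ : ℕ} (hℓ : ℓ.Prime) (φ : A →* B) :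
    ProL A ℓ →* ProL B ℓ where
  toFun x := ⟨fun K =>
      (haveI := (LIndex.comap hℓ φ K).2.1
       haveI := K.2.1
       QuotientGroup.map ((LIndex.comap hℓ φ K).1) K.1 φ le_rfl :
        A ⧸ (LIndex.comap hℓ φ K).1 →* B ⧸ K.1) (x.1 (LIndex.comap hℓ φ K)), by
    intro K₁ K₂ h
    haveI := (LIndex.comap hℓ φ K₁).2.1
    haveI := (LIndex.comap hℓ φ K₂).2.1
    haveI := K₁.2.1
    haveI := K₂.2.1
    have hc : (LIndex.comap hℓ φ K₁).1 ≤ (LIndex.comap hℓ φ K₂).1 := Subgroup.comap_mono h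
    have h2 := x.2 _ _ hc
    obtain ⟨a, ha⟩ := QuotientGroup.mk'_surjective _ (x.1 (LIndex.comap hℓ φ K₁))
    beta_reduce
    rw [← h2, ← ha]
    rfl⟩
  map_one' := by
    ext K
    exact map_one _
  map_mul' := by
    intro x y
    ext K
    exact map_mul _ _ _

/-! If `G/N` is a finite `ℓ`-group, every normal subgroup `K` of `ℓ`-power index in `N` contains
`K' ∩ N` for a normal subgroup `K'` of `ℓ`-power index in `G`: the normal core of `K` in `G`
works, because `g ^ ℓ ^ n ∈ N` for every `g` and `N/K` has exponent dividing some `ℓ ^ m`.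
So the pro-`ℓ` topology of `G` induces that of `N`. This gives injectivity of `N^ℓ → G^ℓ`, and
lets a compatible family in the kernel of `G^ℓ → H^ℓ`, whose components lie in the image of
`N` because `H` is finite, be pulled back to `N^ℓ`. Surjectivity holds because the finite
`ℓ`-group `H` is its own pro-`ℓ` completion. -/

variable {ℓ : ℕ}

namespace LIndex

variable {G : Type*} [Group G]

theorem transition_mk (K₁ K₂ : LIndex G ℓ) (h : K₁.1 ≤ K₂.1) (g : G) :
    transition K₁ K₂ h (g : G ⧸ K₁.1) = (g : G ⧸ K₂.1) := by
  have := K₁.2.1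
  have := K₂.2.1
  exact QuotientGroup.map_mk K₁.1 K₂.1 (MonoidHom.id G) _ g

theorem exists_forall_pow_mem (K : LIndex G ℓ) : ∃ m : ℕ, ∀ g : G, g ^ ℓ ^ m ∈ K.1 := by
  have := K.2.1
  obtain ⟨m, hm⟩ := K.2.2.2
  refine ⟨m, fun g => (QuotientGroup.eq_one_iff _).mp ?_⟩
  rw [QuotientGroup.mk_pow, ← hm, pow_card_eq_one']

def ofIsPGroup (hℓ : ℓ.Prime) (K : Subgroup G) [K.Normal] [Finite (G ⧸ K)]
    (hK : IsPGroup ℓ (G ⧸ K)) : LIndex G ℓ :=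
  haveI := Fact.mk hℓ
  ⟨K, ‹_›, ‹_›, IsPGroup.iff_card.mp hK⟩

theorem exists_le_and_le (hℓ : ℓ.Prime) (K₁ K₂ : LIndex G ℓ) :
    ∃ K : LIndex G ℓ, K.1 ≤ K₁.1 ∧ K.1 ≤ K₂.1 := by
  have := K₁.2.1
  have := K₂.2.1
  have : K₁.1.FiniteIndex := Subgroup.finiteIndex_of_finite_quotient
  have : K₂.1.FiniteIndex := Subgroup.finiteIndex_of_finite_quotient
  obtain ⟨m₁, hm₁⟩ := K₁.exists_forall_pow_mem
  obtain ⟨m₂, hm₂⟩ := K₂.exists_forall_pow_mem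
  have hP : IsPGroup ℓ (G ⧸ (K₁.1 ⊓ K₂.1)) := by
    refine isPGroup_iff_pow_pow_eq_one.mpr fun q => ?_
    obtain ⟨g, rfl⟩ := QuotientGroup.mk_surjective q
    refine ⟨m₁ + m₂, ?_⟩
    rw [← QuotientGroup.mk_pow, QuotientGroup.eq_one_iff, Subgroup.mem_inf, pow_add]
    exact ⟨pow_mul g _ _ ▸ K₁.1.pow_mem (hm₁ g) _, pow_mul' g _ _ ▸ K₂.1.pow_mem (hm₂ g) _⟩
  exact ⟨ofIsPGroup hℓ _ hP, inf_le_left, inf_le_right⟩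

def bot (hℓ : ℓ.Prime) [Finite G] {n : ℕ} (hG : Nat.card G = ℓ ^ n) : LIndex G ℓ :=
  ofIsPGroup hℓ ⊥ ((IsPGroup.of_card hG).of_equiv (QuotientGroup.quotientBot).symm)

end LIndex

theorem isPGroup_quotient_normalCore {G : Type*} [Group G] {p a k : ℕ} {M J : Subgroup G}
    [M.Normal] (hG : ∀ g : G, g ^ p ^ a ∈ M) (hM : ∀ x ∈ M, x ^ p ^ k ∈ J) :
    IsPGroup p (G ⧸ J.normalCore) := by
  refine isPGroup_iff_pow_pow_eq_one.mpr fun q => ?_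
  obtain ⟨g, rfl⟩ := QuotientGroup.mk_surjective q
  refine ⟨a + k, ?_⟩
  rw [← QuotientGroup.mk_pow, QuotientGroup.eq_one_iff]
  intro b
  rw [pow_add, pow_mul, ← conj_pow]
  exact hM _ (‹M.Normal›.conj_mem _ (hG g) b)

def ProLInducing (ℓ : ℕ) {A B : Type*} [Group A] [Group B] (φ : A →* B) : Prop :=
  ∀ K : LIndex A ℓ, ∃ K' : LIndex B ℓ, K'.1.comap φ ≤ K.1

theorem proLInducing_of_exact (hℓ : ℓ.Prime) {N G H : Type*} [Group N] [Group G] [Group H]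
    {i : N →* G} {π : G →* H} (hi : Function.Injective i) (hexact : i.range = π.ker)
    [Finite H] {n : ℕ} (hH : Nat.card H = ℓ ^ n) : ProLInducing ℓ i := by
  intro K
  have : (K.1.map i).FiniteIndex := ⟨by
    rw [Subgroup.index_map_of_injective K.1 hi, hexact]
    exact mul_ne_zero Subgroup.index_ne_zero_of_finite Subgroup.FiniteIndex.index_ne_zero⟩
  obtain ⟨m, hm⟩ := K.exists_forall_pow_mem
  have hG : ∀ g : G, g ^ ℓ ^ n ∈ π.ker := fun g => by
    rw [MonoidHom.mem_ker, map_pow, ← hH, pow_card_eq_one']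
  have hM : ∀ x ∈ π.ker, x ^ ℓ ^ m ∈ K.1.map i := by
    rintro _ hx
    obtain ⟨a, rfl⟩ := hexact ▸ hx
    exact ⟨a ^ ℓ ^ m, hm a, map_pow i a _⟩
  refine ⟨LIndex.ofIsPGroup hℓ _ (isPGroup_quotient_normalCore hG hM), ?_⟩
  calc (K.1.map i).normalCore.comap i ≤ (K.1.map i).comap i :=
        Subgroup.comap_mono (Subgroup.normalCore_le _)
    _ = K.1 := Subgroup.comap_map_eq_self_of_injective hi K.1

theorem QuotientGroup.mk_eq_mk_of_comap_iff {A B : Type*} [Group A] [Group B] (φ : A →* B)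
    (K : Subgroup B) (a b : A) : (a : A ⧸ K.comap φ) = b ↔ (φ a : B ⧸ K) = φ b := by
  rw [QuotientGroup.eq, QuotientGroup.eq, Subgroup.mem_comap, map_mul, map_inv]

namespace ProL

variable {G : Type*} [Group G]

theorem apply_eq_of_le (x : ProL G ℓ) {K₁ K₂ : LIndex G ℓ} (h : K₁.1 ≤ K₂.1) {g : G}
    (hx : x.1 K₁ = (g : G ⧸ K₁.1)) : x.1 K₂ = (g : G ⧸ K₂.1) := by
  rw [← x.2 K₁ K₂ h, hx, LIndex.transition_mk]

def of (G : Type*) [Group G] (ℓ : ℕ) : G →* ProL G ℓ where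
  toFun g := ⟨fun K => (g : G ⧸ K.1), fun K₁ K₂ h => LIndex.transition_mk K₁ K₂ h g⟩
  map_one' := rfl
  map_mul' _ _ := rfl

theorem of_surjective (hℓ : ℓ.Prime) [Finite G] {n : ℕ} (hG : Nat.card G = ℓ ^ n) :
    Function.Surjective (of G ℓ) := by
  intro x
  obtain ⟨g, hg⟩ := QuotientGroup.mk_surjective (x.1 (LIndex.bot hℓ hG))
  exact ⟨g, Subtype.ext <| funext fun K => (x.apply_eq_of_le bot_le hg.symm).symm⟩

end ProL

section proLMap

variable {A B : Type*} [Group A] [Group B] (hℓ : ℓ.Prime) {φ : A →* B}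

theorem proLMap_apply_of_eq (x : ProL A ℓ) (K : LIndex B ℓ) {a : A}
    (hx : x.1 (LIndex.comap hℓ φ K) = (a : A ⧸ (LIndex.comap hℓ φ K).1)) :
    (proLMap hℓ φ x).1 K = (φ a : B ⧸ K.1) := by
  have := K.2.1
  have := (LIndex.comap hℓ φ K).2.1
  change QuotientGroup.map _ _ φ le_rfl (x.1 (LIndex.comap hℓ φ K)) = _
  rw [hx]
  rfl

theorem proLMap_of (a : A) : proLMap hℓ φ (ProL.of A ℓ a) = ProL.of B ℓ (φ a) :=
  Subtype.ext <| funext fun K => proLMap_apply_of_eq hℓ _ K rfl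

theorem proLMap_surjective [Finite B] {n : ℕ} (hB : Nat.card B = ℓ ^ n)
    (hφ : Function.Surjective φ) : Function.Surjective (proLMap hℓ φ) := by
  intro x
  obtain ⟨b, rfl⟩ := ProL.of_surjective hℓ hB x
  obtain ⟨a, rfl⟩ := hφ b
  exact ⟨ProL.of A ℓ a, proLMap_of hℓ a⟩

theorem proLMap_injective_of_proLInducing
    (hφ : ProLInducing ℓ φ) :
    Function.Injective (proLMap hℓ φ) := by
  refine (injective_iff_map_eq_one _).mpr fun x hx => Subtype.ext <| funext fun K => ?_
  obtain ⟨K', hK'⟩ := hφ K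
  obtain ⟨a, ha⟩ := QuotientGroup.mk_surjective (x.1 (LIndex.comap hℓ φ K'))
  have := K.2.1
  have := K'.2.1
  have hφa : (φ a : B ⧸ K'.1) = 1 := by
    rw [← proLMap_apply_of_eq hℓ x K' ha.symm, hx]
    rfl
  change x.1 K = 1
  rw [x.apply_eq_of_le hK' ha.symm]
  exact (QuotientGroup.eq_one_iff a).mpr (hK' ((QuotientGroup.eq_one_iff (φ a)).mp hφa))

theorem proLMap_range_le_ker {C : Type*} [Group C] {ψ : B →* C} (h : φ.range ≤ ψ.ker) :
    (proLMap hℓ φ).range ≤ (proLMap hℓ ψ).ker := by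
  rintro _ ⟨y, rfl⟩
  refine Subtype.ext <| funext fun K => ?_
  obtain ⟨a, ha⟩ :=
    QuotientGroup.mk_surjective (y.1 (LIndex.comap hℓ φ (LIndex.comap hℓ ψ K)))
  have := K.2.1
  rw [proLMap_apply_of_eq hℓ _ K (proLMap_apply_of_eq hℓ y _ ha.symm), h ⟨a, rfl⟩]
  rfl

theorem ProL.exists_apply_eq_of_mem_ker {x : ProL A ℓ} (hx : x ∈ (proLMap hℓ φ).ker)
    (K' : LIndex A ℓ) (K : LIndex B ℓ) : ∃ a : A, φ a ∈ K.1 ∧ x.1 K' = (a : A ⧸ K'.1) := by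
  obtain ⟨K₀, h₀', h₀⟩ := LIndex.exists_le_and_le hℓ K' (LIndex.comap hℓ φ K)
  obtain ⟨a, ha⟩ := QuotientGroup.mk_surjective (x.1 K₀)
  have := K.2.1
  have hφa : (φ a : B ⧸ K.1) = 1 := by
    rw [← proLMap_apply_of_eq hℓ x K (x.apply_eq_of_le h₀ ha.symm), MonoidHom.mem_ker.mp hx]
    rfl
  exact ⟨a, (QuotientGroup.eq_one_iff _).mp hφa, x.apply_eq_of_le h₀' ha.symm⟩

theorem mem_range_proLMap_of_proLInducing
    (hφ : ProLInducing ℓ φ) (x : ProL B ℓ)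
    (hx : ∀ K' : LIndex B ℓ, ∃ a : A, x.1 K' = (φ a : B ⧸ K'.1)) :
    x ∈ (proLMap hℓ φ).range := by
  choose lift hlift using hx
  choose F hF using hφ
  have lift_eq_of_le : ∀ {K : LIndex A ℓ} {K₀ K₁ : LIndex B ℓ}, K₁.1.comap φ ≤ K.1 →
      K₀.1 ≤ K₁.1 → (lift K₁ : A ⧸ K.1) = lift K₀ := by
    intro K K₀ K₁ h₁ h₀₁
    have := x.apply_eq_of_le h₀₁ (hlift K₀)
    rw [hlift K₁, ← QuotientGroup.mk_eq_mk_of_comap_iff] at this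
    exact QuotientGroup.eq.mpr (h₁ (QuotientGroup.eq.mp this))
  have lift_eq : ∀ {K : LIndex A ℓ} {K₁ K₂ : LIndex B ℓ}, K₁.1.comap φ ≤ K.1 →
      K₂.1.comap φ ≤ K.1 → (lift K₁ : A ⧸ K.1) = lift K₂ := by
    intro K K₁ K₂ h₁ h₂
    obtain ⟨K₀, h₀₁, h₀₂⟩ := LIndex.exists_le_and_le hℓ K₁ K₂
    exact (lift_eq_of_le h₁ h₀₁).trans (lift_eq_of_le h₂ h₀₂).symm
  refine ⟨⟨fun K => (lift (F K) : A ⧸ K.1), fun K₁ K₂ h => ?_⟩, ?_⟩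
  · rw [LIndex.transition_mk]
    exact lift_eq ((hF K₁).trans h) (hF K₂)
  · refine Subtype.ext <| funext fun K' => ?_
    rw [proLMap_apply_of_eq hℓ _ K' rfl, hlift K', ← QuotientGroup.mk_eq_mk_of_comap_iff]
    exact lift_eq (K := LIndex.comap hℓ φ K') (hF _) le_rfl

end proLMap

theorem proL_completion_exact_general (ℓ : ℕ) (hℓ : ℓ.Prime)
    (N G H : Type*) [Group N] [Group G] [Group H]
    (i : N →* G) (π : G →* H)
    (hi : Function.Injective i) (hπ : Function.Surjective π)
    (hexact : i.range = π.ker)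
    [Finite H] (n : ℕ) (hH : Nat.card H = ℓ ^ n) :
    Function.Injective (proLMap hℓ i) ∧
    Function.Surjective (proLMap hℓ π) ∧
    (proLMap hℓ i).range = (proLMap hℓ π).ker := by
  have hinducing := proLInducing_of_exact hℓ hi hexact hH
  refine ⟨proLMap_injective_of_proLInducing hℓ hinducing, proLMap_surjective hℓ hH hπ,
    le_antisymm (proLMap_range_le_ker hℓ hexact.le) fun x hx => ?_⟩
  refine mem_range_proLMap_of_proLInducing hℓ hinducing x fun K' => ?_
  obtain ⟨g, hg, hxg⟩ := ProL.exists_apply_eq_of_mem_ker hℓ hx K' (LIndex.bot hℓ hH)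
  obtain ⟨a, rfl⟩ : g ∈ i.range := hexact ▸ MonoidHom.mem_ker.mpr (Subgroup.mem_bot.mp hg)
  exact ⟨a, hxg⟩

/-- Let `1 → N → G → H → 1` be an exact sequence of finitely generated groups, where `H`
is a finite `ℓ`-group and the pro-`ℓ` completion `N^ℓ` of `N` has trivial centre.  Then the
induced sequence of pro-`ℓ` completions `1 → N^ℓ → G^ℓ → H^ℓ → 1` is exact. -/
theorem proL_completion_exact (ℓ : ℕ) (hℓ : ℓ.Prime)
    (N G H : Type*) [Group N] [Group G] [Group H]
    (hNfg : Group.FG N) (hGfg : Group.FG G) (hHfg : Group.FG H)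
    (i : N →* G) (π : G →* H)
    (hi : Function.Injective i) (hπ : Function.Surjective π)
    (hexact : i.range = π.ker)
    [Finite H] (n : ℕ) (hH : Nat.card H = ℓ ^ n)
    (hcentre : Subgroup.center (ProL N ℓ) = ⊥) :
    Function.Injective (proLMap hℓ i) ∧
    Function.Surjective (proLMap hℓ π) ∧
    (proLMap hℓ i).range = (proLMap hℓ π).ker :=
  proL_completion_exact_general ℓ hℓ N G H i π hi hπ hexact n hH
end

section
/- Let g ≥ 2 and let x ∈ M_{2g}(ℚ̄) be the nilpotent Jordan block matrix with ones on the superdiagonal and zeros elsewhere. Define an involution † on M_{2g}(ℚ̄) by viewing a matrix as a g×g block matrix of 2×2 blocks (a b; c d), and setting the (i,j) block of x† equal to the adjugate (d −b; −c a) of the (j,i) block of x. Then x and x† generate M_{2g}(ℚ̄) as a non-unital ℚ̄-subalgebra (ℚ̄-rng). -/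
/-!
Write `x` for the nilpotent shift and `Eᵢⱼ` for the matrix units. A direct computation
gives `x x† + x† x = -(x² + (xᵀ)²)`, so `(xᵀ)²` lies in the generated algebra. So does the
commutator `[x, (xᵀ)²] = E₁₀ - E_{2g-1,2g-2}`; left multiplication by `(xᵀ)²` kills its second
term and leaves `E₃₀`, which `x` moves up to `E₁₀` and `E₀₀`. Now `xᵀ = (xᵀ)² x + E₁₀`, and
starting from `E₀₀`, right multiplication by `x` and left multiplication by `xᵀ` reach every
matrix unit.
-/

open Matrix

variable {K : Type*} [Field K]

/-- The nilpotent Jordan block: ones on the superdiagonal, zeros elsewhere. -/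
def superdiag (m : ℕ) : Matrix (Fin m) (Fin m) K :=
  Matrix.of fun p q => if (p : ℕ) + 1 = (q : ℕ) then 1 else 0

/-- The involution `†` on `M_{2g}(K)`: view a matrix as a `g × g` array of `2 × 2` blocks,
transpose the array of blocks, and replace each block `(a b; c d)` by its adjugate
`(d -b; -c a)`.  Writing indices as `p = 2i + a`, `q = 2j + b` (so `p` lies in block row `i`
with inner index `a`, etc.), the `(p, q)` entry of `M†` is `M_{2j + (1-a), 2i + (1-b)}` if
`a = b`, and `-M_{2j + a, 2i + b}` otherwise. -/
def blockDagger (g : ℕ) (M : Matrix (Fin (2 * g)) (Fin (2 * g)) K) :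
    Matrix (Fin (2 * g)) (Fin (2 * g)) K :=
  Matrix.of fun p q =>
    if h : 0 < g then
      (if (p : ℕ) % 2 = (q : ℕ) % 2 then
        M ⟨2 * ((q : ℕ) / 2) + (1 - (p : ℕ) % 2), by omega⟩
          ⟨2 * ((p : ℕ) / 2) + (1 - (q : ℕ) % 2), by omega⟩
      else
        - M ⟨2 * ((q : ℕ) / 2) + (p : ℕ) % 2, by omega⟩
            ⟨2 * ((p : ℕ) / 2) + (q : ℕ) % 2, by omega⟩)
    else 0

section Superdiag

variable {n : ℕ}

lemma superdiag_apply (p q : Fin n) :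
    (superdiag n : Matrix (Fin n) (Fin n) K) p q = if (p : ℕ) + 1 = q then 1 else 0 := rfl

lemma superdiag_mul_apply (M : Matrix (Fin n) (Fin n) K) (p q : Fin n) :
    (superdiag n * M : Matrix (Fin n) (Fin n) K) p q =
      if h : (p : ℕ) + 1 < n then M ⟨p + 1, h⟩ q else 0 := by
  rw [mul_apply]
  split_ifs with h
  · rw [Fintype.sum_eq_single ⟨p + 1, h⟩ fun k hk => ?_]
    · simp [superdiag_apply]
    · rw [superdiag_apply, if_neg fun hpk => hk (Fin.ext hpk.symm), zero_mul]
  · exact Fintype.sum_eq_zero _ fun k => by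
      rw [superdiag_apply, if_neg (by omega), zero_mul]

lemma mul_superdiag_apply (M : Matrix (Fin n) (Fin n) K) (p q : Fin n) :
    (M * superdiag n : Matrix (Fin n) (Fin n) K) p q =
      if h : 1 ≤ (q : ℕ) then M p ⟨q - 1, by omega⟩ else 0 := by
  rw [mul_apply]
  split_ifs with h
  · rw [Fintype.sum_eq_single ⟨q - 1, by omega⟩ fun k hk => ?_]
    · simp [superdiag_apply, Nat.sub_add_cancel h]
    · rw [superdiag_apply, if_neg fun hkq => hk (Fin.ext (by simp; omega)), mul_zero]
  · exact Fintype.sum_eq_zero _ fun k => by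
      rw [superdiag_apply, if_neg (by omega), mul_zero]

lemma transpose_superdiag_mul_apply (M : Matrix (Fin n) (Fin n) K) (p q : Fin n) :
    ((superdiag n)ᵀ * M : Matrix (Fin n) (Fin n) K) p q =
      if h : 1 ≤ (p : ℕ) then M ⟨p - 1, by omega⟩ q else 0 := by
  rw [← transpose_apply (_ * M), transpose_mul, transpose_transpose, mul_superdiag_apply]
  rfl

lemma single_mul_superdiag (i : Fin n) (j : ℕ) (hj : j + 1 < n) (c : K) :
    single i ⟨j, by omega⟩ c * superdiag n = single i ⟨j + 1, hj⟩ c := by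
  ext p q
  rw [mul_superdiag_apply]
  simp only [single_apply, Fin.ext_iff]
  split_ifs <;> first | rfl | omega

lemma superdiag_mul_single (i : ℕ) (hi : i + 1 < n) (j : Fin n) (c : K) :
    superdiag n * single ⟨i + 1, hi⟩ j c = single ⟨i, by omega⟩ j c := by
  ext p q
  rw [superdiag_mul_apply]
  simp only [single_apply, Fin.ext_iff]
  split_ifs <;> first | rfl | omega

lemma transpose_superdiag_mul_single (i : ℕ) (hi : i + 1 < n) (j : Fin n) (c : K) :
    (superdiag n)ᵀ * single ⟨i, by omega⟩ j c = single ⟨i + 1, hi⟩ j c := by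
  ext p q
  rw [transpose_superdiag_mul_apply]
  simp only [single_apply, Fin.ext_iff]
  split_ifs <;> first | rfl | omega

theorem NonUnitalSubalgebra.eq_top_of_superdiag_mem
    {S : NonUnitalSubalgebra K (Matrix (Fin n) (Fin n) K)} (hx : superdiag n ∈ S)
    (hxT : (superdiag n)ᵀ ∈ S) (hn : 0 < n) (h₀ : single ⟨0, hn⟩ ⟨0, hn⟩ 1 ∈ S) : S = ⊤ := by
  have hrow : ∀ (q : ℕ) (hq : q < n), single ⟨0, hn⟩ ⟨q, hq⟩ 1 ∈ S := by
    intro q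
    induction q with
    | zero => exact fun _ => h₀
    | succ q ih =>
      intro hq
      rw [← single_mul_superdiag _ q hq]
      exact mul_mem (ih _) hx
  have hsingle : ∀ (p : ℕ) (hp : p < n) (j : Fin n), single ⟨p, hp⟩ j 1 ∈ S := by
    intro p
    induction p with
    | zero => exact fun _ j => hrow j j.isLt
    | succ p ih =>
      intro hp j
      rw [← transpose_superdiag_mul_single p hp]
      exact mul_mem hxT (ih _ j)
  refine eq_top_iff.mpr fun M _ =>
    Matrix.induction_on' M (zero_mem S) (fun _ _ => add_mem) ?_
  intro i j c
  rw [← mul_one c, ← smul_eq_mul, ← smul_single]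
  exact SMulMemClass.smul_mem c (hsingle i i.isLt j)

lemma transpose_superdiag_sq_mul_commutator (h : 4 ≤ n) :
    (superdiag n : Matrix (Fin n) (Fin n) K)ᵀ * (superdiag n)ᵀ *
        (superdiag n * ((superdiag n)ᵀ * (superdiag n)ᵀ) -
          (superdiag n)ᵀ * (superdiag n)ᵀ * superdiag n) =
      single ⟨3, by omega⟩ ⟨0, by omega⟩ (1 : K) := by
  ext p q
  simp only [Matrix.mul_assoc, Matrix.mul_sub, Matrix.sub_apply, superdiag_mul_apply,
    transpose_superdiag_mul_apply, transpose_apply, superdiag_apply, single_apply, Fin.ext_iff]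
  split_ifs <;> first | rfl | omega | simp

lemma transpose_superdiag_sq_mul_superdiag_add (h : 2 ≤ n) :
    (superdiag n : Matrix (Fin n) (Fin n) K)ᵀ * (superdiag n)ᵀ * superdiag n +
        single ⟨1, by omega⟩ ⟨0, by omega⟩ (1 : K) = (superdiag n)ᵀ := by
  ext p q
  simp only [Matrix.mul_assoc, Matrix.add_apply, transpose_superdiag_mul_apply,
    transpose_apply, superdiag_apply, single_apply, Fin.ext_iff]
  split_ifs <;> first | rfl | omega | simp

end Superdiag

lemma blockDagger_superdiag_apply (g : ℕ) (p q : Fin (2 * g)) :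
    blockDagger g (superdiag (2 * g) : Matrix (Fin (2 * g)) (Fin (2 * g)) K) p q =
      if ((p : ℕ) + 1 = q ∧ (p : ℕ) % 2 = 0) ∨ ((p : ℕ) = q + 3 ∧ (p : ℕ) % 2 = 1) then -1
      else 0 := by
  have hg : 0 < g := by have := p.isLt; omega
  simp only [blockDagger, superdiag_apply, of_apply, dif_pos hg]
  split_ifs <;> first | rfl | omega | simp

lemma superdiag_mul_blockDagger_add (g : ℕ) :
    (superdiag (2 * g) : Matrix (Fin (2 * g)) (Fin (2 * g)) K) *
        blockDagger g (superdiag (2 * g)) + blockDagger g (superdiag (2 * g)) * superdiag (2 * g) =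
      -(superdiag (2 * g) * superdiag (2 * g) + (superdiag (2 * g))ᵀ * (superdiag (2 * g))ᵀ) := by
  ext p q
  simp only [Matrix.add_apply, Matrix.neg_apply, superdiag_mul_apply, mul_superdiag_apply,
    transpose_superdiag_mul_apply, blockDagger_superdiag_apply, transpose_apply, superdiag_apply]
  split_ifs <;> first | rfl | omega | simp

theorem superdiag_and_dagger_generate_general (K : Type*) [Field K]
    (g : ℕ) (hg : 2 ≤ g) :
    NonUnitalAlgebra.adjoin K
      ({superdiag (2 * g), blockDagger g (superdiag (2 * g))} :
        Set (Matrix (Fin (2 * g)) (Fin (2 * g)) K)) = ⊤ := by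
  set x : Matrix (Fin (2 * g)) (Fin (2 * g)) K := superdiag (2 * g)
  set S := NonUnitalAlgebra.adjoin K {x, blockDagger g x}
  have hx : x ∈ S := NonUnitalAlgebra.subset_adjoin K (Set.mem_insert _ _)
  have hy : blockDagger g x ∈ S :=
    NonUnitalAlgebra.subset_adjoin K (Set.mem_insert_of_mem _ rfl)
  have hT : xᵀ * xᵀ ∈ S := by
    have hxy := superdiag_mul_blockDagger_add (K := K) g
    rw [show xᵀ * xᵀ = -(x * blockDagger g x + blockDagger g x * x) - x * x by
      rw [hxy]; abel]
    exact sub_mem (neg_mem (add_mem (mul_mem hx hy) (mul_mem hy hx))) (mul_mem hx hx)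
  have h30 : single ⟨3, by omega⟩ ⟨0, by omega⟩ (1 : K) ∈ S := by
    rw [← transpose_superdiag_sq_mul_commutator (by omega)]
    exact mul_mem hT (sub_mem (mul_mem hx hT) (mul_mem hT hx))
  have h10 : single ⟨1, by omega⟩ ⟨0, by omega⟩ (1 : K) ∈ S := by
    rw [← superdiag_mul_single 1 (by omega), ← superdiag_mul_single 2 (by omega)]
    exact mul_mem hx (mul_mem hx h30)
  have h00 : single ⟨0, by omega⟩ ⟨0, by omega⟩ (1 : K) ∈ S := by
    rw [← superdiag_mul_single 0 (by omega)]
    exact mul_mem hx h10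
  have hxT : xᵀ ∈ S := by
    rw [← transpose_superdiag_sq_mul_superdiag_add (by omega)]
    exact add_mem (mul_mem hT hx) h10
  exact NonUnitalSubalgebra.eq_top_of_superdiag_mem hx hxT (by omega) h00

/-- Let `g ≥ 2` and let `x ∈ M_{2g}(ℚ̄)` be the nilpotent Jordan block matrix with ones on the
superdiagonal.  Then `x` and `x†` generate `M_{2g}(ℚ̄)` as a non-unital `ℚ̄`-subalgebra. -/
theorem superdiag_and_dagger_generate (K : Type*) [Field K] [IsAlgClosed K] [CharZero K]
    (g : ℕ) (hg : 2 ≤ g) :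
    NonUnitalAlgebra.adjoin K
      ({superdiag (2 * g), blockDagger g (superdiag (2 * g))} :
        Set (Matrix (Fin (2 * g)) (Fin (2 * g)) K)) = ⊤ :=
  superdiag_and_dagger_generate_general K g hg
end
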